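/- For any word v ∈ {a,b}* and letters x ≠ y: |ψ(v)| = |μ_v(x)| + |μ_v(y)| − 2, and gcd(|μ_v(x)|, |μ_v(y)|) = 1, and the minimal period of ψ(v) equals min{|μ_v(x)|, |μ_v(y)|}. -/

import Mathlib

def palClosure (w : List Bool) : List Bool :=
  let k := Nat.find (p := fun k => (w.drop k).reverse = w.drop k)
    ⟨w.length, by simp⟩
  w.take k ++ w.drop k ++ (w.take k).reverse

def psi (v : List Bool) : List Bool := v.foldl (fun w x => palClosure (w ++ [x])) []

def E (v : List Bool) : List Bool := v.map (!·)

def mu (x : Bool) (w : List Bool) : List Bool := w.flatMap (fun y => if y = x then [x] else [x, y])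

def muW : List Bool → List Bool → List Bool
  | [], w => w
  | x :: v, w => mu x (muW v w)

def vN (n : ℕ) : List Bool := (List.range n).map (fun i => decide (i % 2 = 1))

def fibF : ℕ → ℕ
  | 0 => 1
  | 1 => 1
  | n + 2 => fibF (n + 1) + fibF n

def HasPeriod (w : List Bool) (p : ℕ) : Prop :=
  0 < p ∧ ∀ i j (hi : i < w.length) (hj : j < w.length),
    i % p = j % p → w.get ⟨i, hi⟩ = w.get ⟨j, hj⟩

noncomputable def minPeriod (w : List Bool) : ℕ := sInf {p | HasPeriod w p}

def dOp : List Bool → List Bool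
  | x :: y :: u => y :: x :: u
  | w => w

def cOp (v : List Bool) : List Bool := (dOp v.reverse).reverse

def contAux : List ℕ → ℕ
  | [] => 1
  | [a] => a
  | a :: b :: t => a * contAux (b :: t) + contAux t


/-!
Justin's formula `ψ(a v) = μ_a(ψ v) a` comes from following the palindromic suffixes of a word
through `μ_a`: they correspond to the palindromic suffixes of the preimage, so `μ_a` commutes
with palindromic closure up to the trailing `a`. By induction on `v` it gives
`μ_v(x) μ_v(y) = ψ(v) x y` and `μ_v(y) μ_v(x) = ψ(v) y x`, hence `|ψ v| = p + q - 2` and `ψ v`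
has the periods `p = |μ_v(x)|` and `q = |μ_v(y)|`. The Parikh vectors of `μ_v(x)` and `μ_v(y)`
form a matrix of determinant one, so `p` and `q` are coprime. A period `r < min p q` would, by
two applications of the Fine–Wilf theorem, make `ψ v` constant, although it contains both `x`
and `y`.
-/

section Periods

variable {α : Type*} {w : List α} {p q r : ℕ}

def IsPeriod (w : List α) (p : ℕ) : Prop :=
  ∀ i, i + p < w.length → w[i]? = w[i + p]?

theorem IsPeriod.sub (hp : IsPeriod w p) (hq : IsPeriod w q) (hpq : p ≤ q)
    (hlen : p + q ≤ w.length) : IsPeriod w (q - p) := by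
  intro i hi
  by_cases h : i + q < w.length
  · rw [hq i h, hp (i + (q - p)) (by omega)]
    congr 1
    omega
  · have e₁ := hp (i - p) (by omega)
    have e₂ := hq (i - p) (by omega)
    rw [Nat.sub_add_cancel (by omega)] at e₁
    rw [← e₁, e₂]
    congr 1
    omega

/-- The weak form of the Fine–Wilf theorem. -/
theorem IsPeriod.gcd {p q : ℕ} (hp : IsPeriod w p) (hq : IsPeriod w q)
    (hlen : p + q ≤ w.length) : IsPeriod w (Nat.gcd p q) := by
  obtain rfl | hp0 := Nat.eq_zero_or_pos p
  · simpa
  obtain rfl | hq0 := Nat.eq_zero_or_pos q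
  · simpa
  rcases le_total p q with hpq | hqp
  · rw [← Nat.gcd_sub_self_right hpq]
    exact IsPeriod.gcd hp (hp.sub hq hpq hlen) (by omega)
  · rw [Nat.gcd_comm, ← Nat.gcd_sub_self_right hqp]
    exact IsPeriod.gcd hq (hq.sub hp hqp (by omega)) (by omega)
termination_by p + q

theorem IsPeriod.one_of_lt_of_coprime (hp : IsPeriod w p) (hq : IsPeriod w q) (hpq : Nat.Coprime p q)
    (hlen : p + q = w.length + 2) (hr : IsPeriod w r) (hr0 : 0 < r) (hrp : r < p)
    (hrq : r < q) : IsPeriod w 1 := by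
  wlog hlt : p < q generalizing p q
  · have hne : p ≠ q := by
      rintro rfl
      rw [Nat.coprime_self] at hpq
      omega
    exact this hq hp hpq.symm (by omega) hrq hrp (by omega)
  have hg := hr.gcd hp (by omega)
  have hgp : r.gcd p ∣ p := Nat.gcd_dvd_right r p
  have hgr : r.gcd p ≤ r := Nat.le_of_dvd hr0 (Nat.gcd_dvd_left r p)
  -- a proper divisor of `p` is `1` or at most `p - 2`
  obtain hg1 | hg2 : r.gcd p = 1 ∨ r.gcd p + 2 ≤ p := by
    obtain ⟨k, hk⟩ := hgp
    have hk2 : 2 ≤ k := by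
      by_contra!
      interval_cases k <;> omega
    have := Nat.gcd_pos_of_pos_left p hr0
    by_cases hg1 : r.gcd p = 1
    · exact .inl hg1
    · have : 2 ≤ r.gcd p := by omega
      exact .inr (by nlinarith)
  · rwa [hg1] at hg
  · have := hg.gcd hq (by omega)
    rwa [(Nat.Coprime.coprime_dvd_left hgp hpq).gcd_eq_one] at this

theorem IsPeriod.mul (hp : IsPeriod w p) (k : ℕ) : IsPeriod w (p * k) := by
  induction k with
  | zero => intro i _; simp
  | succ k ih =>
    intro i hi
    rw [Nat.mul_succ, ← Nat.add_assoc] at hi ⊢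
    rw [ih i (by omega), hp _ hi]

theorem IsPeriod.getElem?_mod (hp : IsPeriod w p) {i : ℕ} (hi : i < w.length) :
    w[i]? = w[i % p]? := by
  have := hp.mul (i / p) (i % p) (by rwa [Nat.mod_add_div])
  rwa [Nat.mod_add_div, eq_comm] at this

theorem IsPeriod.eq_of_mem_of_one (h : IsPeriod w 1) {x y : α} (hx : x ∈ w) (hy : y ∈ w) :
    x = y := by
  obtain ⟨i, hi, rfl⟩ := List.getElem_of_mem hx
  obtain ⟨j, hj, rfl⟩ := List.getElem_of_mem hy
  have hi₀ := h.getElem?_mod hi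
  have hj₀ := h.getElem?_mod hj
  rw [Nat.mod_one] at hi₀ hj₀
  rw [← Option.some_inj, ← List.getElem?_eq_getElem, ← List.getElem?_eq_getElem, hi₀, hj₀]

theorem IsPeriod.of_isPrefix_append {u v : List α} (hu : w <+: u ++ v) (hv : w <+: v ++ u) :
    IsPeriod w u.length := by
  obtain ⟨s, hs⟩ := hu
  obtain ⟨s', hs'⟩ := hv
  have hlen : w.length ≤ u.length + v.length := by
    have := congrArg List.length hs
    simp only [List.length_append] at this
    omega
  intro i hi
  calc w[i]? = (v ++ u)[i]? := by rw [← hs', List.getElem?_append_left (by omega)]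
    _ = v[i]? := List.getElem?_append_left (by omega)
    _ = (u ++ v)[i + u.length]? := by rw [List.getElem?_append_right (by omega)]; simp
    _ = w[i + u.length]? := by rw [← hs, List.getElem?_append_left hi]

end Periods

theorem hasPeriod_iff {w : List Bool} {p : ℕ} : HasPeriod w p ↔ 0 < p ∧ IsPeriod w p := by
  refine ⟨fun ⟨hp, h⟩ => ⟨hp, fun i hi => ?_⟩, fun ⟨hp, h⟩ => ⟨hp, fun i j hi hj hij => ?_⟩⟩
  · rw [List.getElem?_eq_getElem (by omega), List.getElem?_eq_getElem hi]
    exact congrArg some (h i (i + p) _ hi (by simp))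
  · have := (h.getElem?_mod hi).trans (hij ▸ (h.getElem?_mod hj).symm)
    rw [List.getElem?_eq_getElem hi, List.getElem?_eq_getElem hj, Option.some_inj] at this
    simpa using this

section Morphism

variable (a : Bool)

theorem mu_append (s t : List Bool) : mu a (s ++ t) = mu a s ++ mu a t := by
  simp [mu]

theorem mu_singleton (c : Bool) : mu a [c] = if c = a then [a] else [a, c] := by
  simp [mu]

theorem mu_cons (c : Bool) (s : List Bool) : mu a (c :: s) = mu a [c] ++ mu a s :=
  mu_append a [c] s

theorem mu_not_cons (s : List Bool) : mu a ((!a) :: s) = a :: (!a) :: mu a s := by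
  simp [mu]

theorem head?_mu (s : List Bool) : (mu a s).head? = s.head?.map fun _ => a := by
  cases s with
  | nil => rfl
  | cons c s => rw [mu_cons, mu_singleton]; split <;> rfl

theorem getLast?_mu (s : List Bool) : (mu a s).getLast? = s.getLast? := by
  induction s using List.reverseRecOn with
  | nil => rfl
  | append_singleton s c _ => rw [mu_append, mu_singleton]; split <;> simp_all

theorem exists_mu_eq_cons {s : List Bool} (hs : s ≠ []) : ∃ T, mu a s = a :: T := by
  obtain ⟨c, s, rfl⟩ := List.exists_cons_of_ne_nil hs
  exact List.head?_eq_some_iff.1 (by simp [head?_mu])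

theorem mu_ne_not_cons (s t : List Bool) : mu a s ≠ (!a) :: t := by
  intro h
  have := congrArg List.head? h
  rw [head?_mu] at this
  cases s <;> cases a <;> simp at this

theorem mu_injective : Function.Injective (mu a) := by
  intro s
  induction s with
  | nil => rintro (_ | ⟨d, t⟩) h; exacts [rfl, by simpa [head?_mu] using congrArg List.head? h]
  | cons c s ih =>
    rintro (_ | ⟨d, t⟩) h
    · simpa [head?_mu] using congrArg List.head? h
    rw [mu_cons, mu_cons a d] at h
    obtain rfl | hcd := eq_or_ne c d
    · rw [ih (List.append_cancel_left h)]
    -- one of `c`, `d` is `a`, and then the other block starts with the letter `!a`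
    obtain ⟨hc, hd⟩ | ⟨hc, hd⟩ : (c = a ∧ d = !a) ∨ (c = !a ∧ d = a) := by
      cases a <;> cases c <;> cases d <;> simp_all
    · rw [hc, hd] at h
      simp [mu_singleton] at h
      exact absurd h (mu_ne_not_cons a s _)
    · rw [hc, hd] at h
      simp [mu_singleton] at h
      exact absurd h.symm (mu_ne_not_cons a t _)

theorem mu_isPrefix {s t : List Bool} (h : s <+: t) : mu a s <+: mu a t :=
  h.flatMap _

theorem length_mu_take_mono (t : List Bool) {k i : ℕ} (h : k ≤ i) :
    (mu a (t.take k)).length ≤ (mu a (t.take i)).length :=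
  (mu_isPrefix a (List.take_prefix_take_left h)).length_le

theorem reverse_mu_append_singleton (s : List Bool) :
    (mu a s ++ [a]).reverse = mu a s.reverse ++ [a] := by
  induction s with
  | nil => rfl
  | cons c s ih =>
    rw [mu_cons, List.append_assoc, List.reverse_append, ih, List.reverse_cons, mu_append,
      mu_singleton]
    split <;> simp_all

theorem mu_append_singleton_palindrome_iff (s : List Bool) :
    (mu a s ++ [a]).reverse = mu a s ++ [a] ↔ s.reverse = s := by
  rw [reverse_mu_append_singleton, List.append_left_inj, (mu_injective a).eq_iff]

theorem tail_mu_palindrome_iff {s : List Bool} (hs : s ≠ []) :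
    (mu a s).tail.reverse = (mu a s).tail ↔ s.reverse = s := by
  obtain ⟨T, hT⟩ := exists_mu_eq_cons a hs
  rw [← mu_append_singleton_palindrome_iff a s, hT]
  simp

theorem exists_drop_mu (t : List Bool) {j : ℕ} (hj : j ≤ (mu a t).length) :
    ∃ i, ((mu a t).drop j = mu a (t.drop i) ∧ j = (mu a (t.take i)).length) ∨
      ((t.drop i).head? = some (!a) ∧ (mu a t).drop j = (mu a (t.drop i)).tail ∧
        j = (mu a (t.take i)).length + 1) := by
  induction t generalizing j with
  | nil => exact ⟨0, .inl ⟨by simp_all [mu], by simp_all [mu]⟩⟩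
  | cons c t ih =>
    rcases Nat.eq_zero_or_pos j with rfl | hj0
    · exact ⟨0, .inl ⟨rfl, rfl⟩⟩
    rw [mu_cons, List.length_append] at hj
    by_cases hc : (mu a [c]).length ≤ j
    · obtain ⟨i, hi⟩ := ih (j := j - (mu a [c]).length) (by omega)
      refine ⟨i + 1, ?_⟩
      have hdrop : (mu a (c :: t)).drop j = (mu a t).drop (j - (mu a [c]).length) := by
        rw [mu_cons, List.drop_append, List.drop_eq_nil_of_le hc, List.nil_append]
      rw [hdrop, List.drop_succ_cons, List.take_succ_cons, mu_cons a c (t.take i), List.length_append]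
      rcases hi with ⟨h₁, h₂⟩ | ⟨h₀, h₁, h₂⟩
      · exact .inl ⟨h₁, by omega⟩
      · exact .inr ⟨h₀, h₁, by omega⟩
    · -- `j` falls strictly inside the block `[a, c]`
      have hc' : c = !a := by
        cases a <;> cases c <;> simp_all [mu_singleton]
      have hj1 : j = 1 := by
        subst hc'; simp [mu_singleton] at hc; omega
      subst hc' hj1
      exact ⟨0, .inr ⟨rfl, by simp [mu_not_cons], rfl⟩⟩

end Morphism

section PalindromicClosure

def palSuffixStarts {α : Type*} (w : List α) : Set ℕ := {k | (w.drop k).reverse = w.drop k}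

theorem exists_isLeast_palSuffixStarts {α : Type*} (w : List α) :
    ∃ k, IsLeast (palSuffixStarts w) k :=
  ⟨_, Nat.sInf_mem ⟨w.length, by simp [palSuffixStarts]⟩, fun _ => Nat.sInf_le⟩

theorem palClosure_eq_of_isLeast {w : List Bool} {j : ℕ} (h : IsLeast (palSuffixStarts w) j) :
    palClosure w = w ++ (w.take j).reverse := by
  have hfind : Nat.find (p := fun k => (w.drop k).reverse = w.drop k) ⟨w.length, by simp⟩ = j :=
    (Nat.find_eq_iff _).2 ⟨h.1, fun i hi hpal => (h.2 hpal).not_gt hi⟩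
  unfold palClosure
  simp only [hfind, List.take_append_drop]

theorem head?_eq_getLast?_of_reverse_eq {α : Type*} {l : List α} (h : l.reverse = l) :
    l.head? = l.getLast? := by
  conv_lhs => rw [← h]
  exact List.head?_reverse

variable (a : Bool)

theorem mem_palSuffixStarts_of_mu_append_singleton {t : List Bool} {j : ℕ}
    (hj : j ≤ (mu a t).length) (hpal : j ∈ palSuffixStarts (mu a t ++ [a])) :
    ∃ i ∈ palSuffixStarts t, j = (mu a (t.take i)).length := by
  simp only [palSuffixStarts, Set.mem_ofPred_eq, List.drop_append_of_le_length hj] at hpal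
  obtain ⟨i, ⟨hdrop, hji⟩ | ⟨hhead, hdrop, -⟩⟩ := exists_drop_mu a t hj
  · rw [hdrop, mu_append_singleton_palindrome_iff] at hpal
    exact ⟨i, hpal, hji⟩
  · -- such a suffix starts with `!a` but ends with `a`
    obtain ⟨s, hs⟩ := List.head?_eq_some_iff.1 hhead
    have := head?_eq_getLast?_of_reverse_eq hpal
    rw [hdrop, hs, mu_not_cons, List.tail_cons, List.getLast?_concat] at this
    simp at this

theorem mem_palSuffixStarts_of_mu {t : List Bool} (ht : t.getLast? = some (!a)) {j : ℕ}
    (hj : j < (mu a t).length) (hpal : j ∈ palSuffixStarts (mu a t)) :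
    ∃ i ∈ palSuffixStarts t, j = (mu a (t.take i)).length + 1 := by
  obtain ⟨i, ⟨hdrop, -⟩ | ⟨hhead, hdrop, hji⟩⟩ := exists_drop_mu a t hj.le
  · -- such a suffix starts with `a` but ends with `!a`
    have hi : ¬t.length ≤ i := fun hi => by
      rw [List.drop_eq_nil_of_le hi] at hdrop
      exact absurd (List.drop_eq_nil_iff.1 hdrop) (by omega)
    obtain ⟨c, s, hs⟩ := List.exists_cons_of_ne_nil (List.drop_eq_nil_iff.not.2 hi)
    have := head?_eq_getLast?_of_reverse_eq hpal
    rw [hdrop, head?_mu, getLast?_mu, List.getLast?_drop, if_neg hi, ht, hs] at this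
    simp at this
  · refine ⟨i, ?_, hji⟩
    have hne : t.drop i ≠ [] := by rintro h; simp [h] at hhead
    rw [palSuffixStarts, Set.mem_ofPred_eq, hdrop, tail_mu_palindrome_iff a hne] at hpal
    exact hpal

end PalindromicClosure

section Justin

variable (a : Bool)

theorem palClosure_mu_append_singleton (t : List Bool) :
    palClosure (mu a t ++ [a]) = mu a (palClosure t) ++ [a] := by
  obtain ⟨k, hk⟩ := exists_isLeast_palSuffixStarts t
  have hsplit : mu a t = mu a (t.take k) ++ mu a (t.drop k) := by
    rw [← mu_append, List.take_append_drop]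
  have hleast : IsLeast (palSuffixStarts (mu a t ++ [a])) (mu a (t.take k)).length := by
    refine ⟨?_, fun j hj => ?_⟩
    · rw [palSuffixStarts, Set.mem_ofPred_eq, hsplit, List.append_assoc, List.drop_left,
        mu_append_singleton_palindrome_iff]
      exact hk.1
    · by_cases hjt : j ≤ (mu a t).length
      · obtain ⟨i, hi, rfl⟩ := mem_palSuffixStarts_of_mu_append_singleton a hjt hj
        exact length_mu_take_mono a t (hk.2 hi)
      · rw [hsplit, List.length_append] at hjt
        omega
  have htake : (mu a t ++ [a]).take (mu a (t.take k)).length = mu a (t.take k) := by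
    rw [hsplit, List.append_assoc, List.take_left]
  rw [palClosure_eq_of_isLeast hleast, htake, palClosure_eq_of_isLeast hk, List.append_assoc,
    show [a] ++ (mu a (t.take k)).reverse = (mu a (t.take k) ++ [a]).reverse by simp,
    reverse_mu_append_singleton, mu_append, List.append_assoc]

theorem palClosure_mu_of_getLast? {t : List Bool} (ht : t.getLast? = some (!a)) :
    palClosure (mu a t) = mu a (palClosure t) ++ [a] := by
  obtain ⟨k, hk⟩ := exists_isLeast_palSuffixStarts t
  have htne : t ≠ [] := by rintro rfl; simp at ht
  have hne : t.drop k ≠ [] := by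
    have := hk.2 (show t.length - 1 ∈ palSuffixStarts t by
      simp [palSuffixStarts, List.drop_length_sub_one htne])
    have := List.length_pos_of_ne_nil htne
    exact List.drop_eq_nil_iff.not.2 (by omega)
  obtain ⟨T, hT⟩ := exists_mu_eq_cons a hne
  have hsplit : mu a t = mu a (t.take k) ++ a :: T := by
    rw [← hT, ← mu_append, List.take_append_drop]
  have hleast : IsLeast (palSuffixStarts (mu a t)) ((mu a (t.take k)).length + 1) := by
    refine ⟨?_, fun j hj => ?_⟩
    · have := (tail_mu_palindrome_iff a hne).2 hk.1
      rw [hT] at this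
      simpa [palSuffixStarts, hsplit] using this
    · by_cases hjt : j < (mu a t).length
      · obtain ⟨i, hi, rfl⟩ := mem_palSuffixStarts_of_mu a ht hjt hj
        have := length_mu_take_mono a t (hk.2 hi)
        omega
      · rw [hsplit] at hjt
        simp at hjt
        omega
  have htake : (mu a t).take ((mu a (t.take k)).length + 1) = mu a (t.take k) ++ [a] := by
    rw [hsplit, List.append_cons, List.take_left' (by simp)]
  rw [palClosure_eq_of_isLeast hleast, htake, palClosure_eq_of_isLeast hk,
    reverse_mu_append_singleton, mu_append, List.append_assoc]

theorem psi_append_singleton (v : List Bool) (c : Bool) :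
    psi (v ++ [c]) = palClosure (psi v ++ [c]) := by
  simp [psi, List.foldl_append]

theorem psi_cons (v : List Bool) : psi (a :: v) = mu a (psi v) ++ [a] := by
  induction v using List.reverseRecOn with
  | nil =>
    have : IsLeast (palSuffixStarts [a]) 0 := ⟨by simp [palSuffixStarts], fun _ _ => Nat.zero_le _⟩
    exact palClosure_eq_of_isLeast this
  | append_singleton v c ih =>
    rw [← List.cons_append, psi_append_singleton, ih, psi_append_singleton]
    rcases Bool.eq_or_eq_not c a with rfl | rfl
    · rw [show mu c (psi v) ++ [c] ++ [c] = mu c (psi v ++ [c]) ++ [c] by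
        simp [mu_append, mu_singleton]]
      exact palClosure_mu_append_singleton c _
    · rw [show mu a (psi v) ++ [a] ++ [!a] = mu a (psi v ++ [!a]) by
        simp [mu_append, mu_singleton]]
      exact palClosure_mu_of_getLast? a (by simp)

end Justin

section StandardPair

theorem mu_pair (a : Bool) {x y : Bool} (hxy : x ≠ y) : mu a [x, y] = [a, x, y] := by
  cases a <;> cases x <;> cases y <;> simp_all [mu]

theorem muW_append_muW (v : List Bool) {x y : Bool} (hxy : x ≠ y) :
    muW v [x] ++ muW v [y] = psi v ++ [x, y] := by
  induction v with
  | nil => rfl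
  | cons a v ih =>
    rw [muW, muW, ← mu_append, ih, mu_append, mu_pair a hxy, psi_cons]
    simp

theorem getLast?_muW (v : List Bool) (x : Bool) : (muW v [x]).getLast? = some x := by
  induction v with
  | nil => rfl
  | cons a v ih => rw [muW, getLast?_mu, ih]

theorem count_mu (a z : Bool) (w : List Bool) :
    (mu a w).count z = if z = a then w.length else w.count z := by
  induction w with
  | nil => simp [mu]
  | cons c w ih =>
    rw [mu_cons, List.count_append, ih, mu_singleton]
    cases a <;> cases c <;> cases z <;> simp <;> omega

theorem count_muW_det (v : List Bool) (x : Bool) :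
    (muW v [x]).count x * (muW v [!x]).count (!x) =
      (muW v [x]).count (!x) * (muW v [!x]).count x + 1 := by
  induction v with
  | nil => cases x <;> rfl
  | cons a v ih =>
    have h₁ := List.count_not_add_count (muW v [x]) x
    have h₂ := List.count_not_add_count (muW v [!x]) x
    rcases Bool.eq_or_eq_not a x with rfl | rfl
    · simp only [muW, count_mu, if_pos, Bool.not_ne_self, if_false]
      nlinarith
    · simp only [muW, count_mu, if_pos, Bool.self_ne_not, if_false]
      nlinarith

theorem coprime_length_muW (v : List Bool) {x y : Bool} (hxy : x ≠ y) :
    Nat.Coprime (muW v [x]).length (muW v [y]).length := by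
  obtain rfl : y = !x := by cases x <;> cases y <;> simp_all
  have h := count_muW_det v x
  rw [← List.count_not_add_count (muW v [x]) x, ← List.count_not_add_count (muW v [!x]) x]
  refine Nat.isCoprime_iff_coprime.1 ⟨(muW v [!x]).count (!x), -(muW v [x]).count (!x), ?_⟩
  zify at h
  push_cast
  linear_combination h

end StandardPair

theorem length_muW_add_length_muW (v : List Bool) {x y : Bool} (hxy : x ≠ y) :
    (muW v [x]).length + (muW v [y]).length = (psi v).length + 2 := by
  simpa using congrArg List.length (muW_append_muW v hxy)

theorem mem_psi_of_two_le_length (v : List Bool) {x y : Bool} (hxy : x ≠ y)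
    (hy : 2 ≤ (muW v [y]).length) : x ∈ psi v := by
  have hprefix : muW v [x] <+: psi v :=
    List.prefix_of_prefix_length_le (muW_append_muW v hxy ▸ List.prefix_append _ _)
      (List.prefix_append _ _) (by have := length_muW_add_length_muW v hxy; omega)
  exact hprefix.mem (List.mem_of_getLast? (getLast?_muW v x))

theorem minPeriod_psi (v : List Bool) {x y : Bool} (hxy : x ≠ y) :
    minPeriod (psi v) = min (muW v [x]).length (muW v [y]).length := by
  have hlen := length_muW_add_length_muW v hxy
  have hx : IsPeriod (psi v) (muW v [x]).length :=
    .of_isPrefix_append ⟨_, (muW_append_muW v hxy).symm⟩ ⟨_, (muW_append_muW v hxy.symm).symm⟩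
  have hy : IsPeriod (psi v) (muW v [y]).length :=
    .of_isPrefix_append ⟨_, (muW_append_muW v hxy.symm).symm⟩ ⟨_, (muW_append_muW v hxy).symm⟩
  have hpos (z : Bool) : 0 < (muW v [z]).length :=
    List.length_pos_of_mem (List.mem_of_getLast? (getLast?_muW v z))
  refine IsLeast.csInf_eq ⟨hasPeriod_iff.2 ⟨lt_min (hpos x) (hpos y), ?_⟩, fun r hr => ?_⟩
  · rcases min_choice (muW v [x]).length (muW v [y]).length with h | h <;> rwa [h]
  obtain ⟨hr0, hr⟩ := hasPeriod_iff.1 hr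
  by_contra! hlt
  rw [lt_min_iff] at hlt
  have hconst := hx.one_of_lt_of_coprime hy (coprime_length_muW v hxy) hlen hr hr0 hlt.1 hlt.2
  exact hxy (hconst.eq_of_mem_of_one (mem_psi_of_two_le_length v hxy (by omega))
    (mem_psi_of_two_le_length v hxy.symm (by omega)))

theorem stmt14 (v : List Bool) (x y : Bool) (hxy : x ≠ y) :
    (psi v).length = (muW v [x]).length + (muW v [y]).length - 2 ∧
    Nat.Coprime (muW v [x]).length (muW v [y]).length ∧
    minPeriod (psi v) = min (muW v [x]).length (muW v [y]).length := by
  have := length_muW_add_length_muW v hxy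
  exact ⟨by omega, coprime_length_muW v hxy, minPeriod_psi v hxy⟩
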